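/- Fix ε > 0, δ > 0 and an integer L ≥ 2. A learner strategy φ of length N is (ε,δ,L)-secure if and only if it is (ε,δ,L)-private. -/

import Mathlib

open Set

/-- A learner strategy of length `N` with seed space `Fin Y` (representing `{1,…,𝒴}`):
query functions mapping previous responses and the seed to a query in `[0,1)`,
and an estimation function mapping all responses and the seed to an estimate in `[0,1)`. -/
structure Strategy (N Y : ℕ) where
  query : (k : Fin N) → (Fin (k : ℕ) → Bool) → Fin Y → ℝ
  estimate : (Fin N → Bool) → Fin Y → ℝ
  query_mem : ∀ k h y, query k h y ∈ Set.Ico (0 : ℝ) 1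
  estimate_mem : ∀ r y, estimate r y ∈ Set.Ico (0 : ℝ) 1

namespace Strategy

variable {N Y : ℕ}

/-- The first `k` responses when the true value is `x` and the seed is `y`:
`r_k = 1` iff `x ≥ q_k`. -/
noncomputable def resps (φ : Strategy N Y) (x : ℝ) (y : Fin Y) : (k : ℕ) → Fin k → Bool
  | 0 => Fin.elim0
  | k + 1 => fun i =>
      if h : (i : ℕ) < k then resps φ x y k ⟨i, h⟩
      else if hk : k < N then decide (φ.query ⟨k, hk⟩ (resps φ x y k) y ≤ x)
      else false

/-- The query sequence `q̄(x,y)`. -/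
noncomputable def queries (φ : Strategy N Y) (x : ℝ) (y : Fin Y) : Fin N → ℝ :=
  fun k => φ.query k (resps φ x y (k : ℕ)) y

/-- The learner's estimate `x̂(x,y)`. -/
noncomputable def estim (φ : Strategy N Y) (x : ℝ) (y : Fin Y) : ℝ :=
  φ.estimate (resps φ x y N) y

/-- `Q(x)`: the set of query sequences that can arise when the true value is `x`. -/
def Q (φ : Strategy N Y) (x : ℝ) : Set (Fin N → ℝ) :=
  {q | ∃ y : Fin Y, φ.queries x y = q}

/-- The information set `I(q̄)` of the adversary. -/
def infoSet (φ : Strategy N Y) (q : Fin N → ℝ) : Set ℝ :=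
  {x | x ∈ Set.Ico (0 : ℝ) 1 ∧ q ∈ φ.Q x}

/-- The accuracy constraint with parameter `ε`. -/
def Accurate (ε : ℝ) (φ : Strategy N Y) : Prop :=
  ∀ x ∈ Set.Ico (0 : ℝ) 1, ∀ y : Fin Y, |φ.estim x y - x| ≤ ε / 2

end Strategy

/-- `E` is `(δ,L)`-coverable: `E` is contained in the union of `L` closed intervals
of length at most `δ` each. -/
def Coverable (δ : ℝ) (L : ℕ) (E : Set ℝ) : Prop :=
  ∃ a b : Fin L → ℝ, (∀ j, b j - a j ≤ δ) ∧ E ⊆ ⋃ j, Set.Icc (a j) (b j)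

/-- The `δ`-cover number `C_δ(E)`: the least positive `L` such that `E` is `(δ,L)`-coverable. -/
noncomputable def coverNumber (δ : ℝ) (E : Set ℝ) : ℕ :=
  sInf {L : ℕ | 0 < L ∧ Coverable δ L E}

/-- An `(ε,δ,L)`-private learner strategy. -/
def IsPrivate (ε δ : ℝ) (L : ℕ) {N Y : ℕ} (φ : Strategy N Y) : Prop :=
  φ.Accurate ε ∧ ∀ x ∈ Set.Ico (0 : ℝ) 1, ∀ q ∈ φ.Q x, L ≤ coverNumber δ (φ.infoSet q)

/-- `N*(ε,δ,L)`: the least length for which an `(ε,δ,L)`-private strategy exists. -/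
noncomputable def Nstar (ε δ : ℝ) (L : ℕ) : ℕ :=
  sInf {N : ℕ | ∃ Y : ℕ, 0 < Y ∧ ∃ φ : Strategy N Y, IsPrivate ε δ L φ}

open MeasureTheory ENNReal in
/-- A strategy is `(ε,δ,L)`-secure if it is accurate and, for every possible query sequence
`q̄ ∈ Q = ⋃_x Q(x)`, no adversary estimator (a Borel probability measure on `[0,1)`) is
`(δ,L)`-correct with respect to `q̄`: every such measure puts mass at most `1/L` on the
`δ/2`-ball around some point of the information set `I(q̄)`. -/
def IsSecure (ε δ : ℝ) (L : ℕ) {N Y : ℕ} (φ : Strategy N Y) : Prop :=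
  φ.Accurate ε ∧
  ∀ x ∈ Set.Ico (0 : ℝ) 1, ∀ q ∈ φ.Q x,
    ∀ μ : Measure ℝ, IsProbabilityMeasure μ → μ (Set.Ico (0 : ℝ) 1)ᶜ = 0 →
      ∃ z ∈ φ.infoSet q, μ {w | |w - z| ≤ δ / 2} ≤ ((L : ℝ≥0∞))⁻¹


/-!
Both conditions are statements about each information set `I ⊆ [0,1)` and covers of it by
`L - 1` intervals of length `δ`. If such a cover exists, the uniform distribution on the
midpoints of the intervals (clipped to `[0,1)`) puts mass at least `1/(L-1) > 1/L` within `δ/2`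
of every point of `I`. If none exists, repeatedly taking (nearly) the leftmost remaining point of
`I` and discarding everything within `δ` of it yields `L` points of `I` more than `δ` apart; their
closed `δ/2`-balls are disjoint, so every probability measure gives one of them mass at most `1/L`.
-/

open Function Metric MeasureTheory
open scoped ENNReal

namespace Coverable

variable {δ : ℝ} {n m : ℕ} {E F : Set ℝ}

theorem mono (hF : Coverable δ n F) (hEF : E ⊆ F) : Coverable δ n E := by
  obtain ⟨a, b, hab, hcov⟩ := hF
  exact ⟨a, b, hab, hEF.trans hcov⟩

theorem cons (hF : Coverable δ n F) (c : ℝ) (hE : E ⊆ Icc c (c + δ) ∪ F) :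
    Coverable δ (n + 1) E := by
  obtain ⟨a, b, hab, hcov⟩ := hF
  refine ⟨Fin.cons c a, Fin.cons (c + δ) b, Fin.cases (by simp) fun j => by simpa using hab j, ?_⟩
  refine hE.trans (union_subset (subset_iUnion_of_subset 0 (by simp)) (hcov.trans ?_))
  exact iUnion_subset fun j => subset_iUnion_of_subset j.succ (by simp)

theorem mono_card (h : Coverable δ n E) (hnm : n ≤ m) : Coverable δ m E := by
  induction m, hnm using Nat.le_induction with
  | base => exact h
  | succ m _ ih => exact ih.cons 0 subset_union_right

end Coverable

theorem coverable_empty (δ : ℝ) : Coverable δ 0 ∅ :=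
  ⟨Fin.elim0, Fin.elim0, fun j => j.elim0, empty_subset _⟩

theorem coverable_Icc (δ : ℝ) (n : ℕ) (c : ℝ) : Coverable δ (n + 1) (Icc c (c + (n + 1) * δ)) := by
  induction n generalizing c with
  | zero => exact (coverable_empty δ).cons c (by simp)
  | succ n ih =>
    refine (ih (c + δ)).cons c fun z hz => ?_
    by_cases hzc : z ≤ c + δ
    · exact Or.inl ⟨hz.1, hzc⟩
    · exact Or.inr ⟨by linarith, by push_cast at hz; linarith [hz.2]⟩

theorem Bornology.IsBounded.exists_coverable {δ : ℝ} (hδ : 0 < δ) {E : Set ℝ}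
    (hE : Bornology.IsBounded E) : ∃ n, Coverable δ n E := by
  obtain ⟨r, hr⟩ := (isBounded_iff_subset_closedBall 0).1 hE
  obtain ⟨n, hn⟩ := exists_nat_ge (2 * r / δ)
  refine ⟨n + 1, (coverable_Icc δ n (-r)).mono (hr.trans fun z hz => ?_)⟩
  rw [Real.closedBall_eq_Icc] at hz
  have : 2 * r ≤ (n + 1) * δ := (div_le_iff₀ hδ).1 (by linarith)
  exact ⟨by linarith [hz.1], by linarith [hz.2]⟩

theorem lt_coverNumber_iff {δ : ℝ} {n : ℕ} {E : Set ℝ} (hn : 0 < n) (hE : ∃ m, Coverable δ m E) :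
    n < coverNumber δ E ↔ ¬ Coverable δ n E := by
  refine ⟨fun hlt hcov => (Nat.sInf_le (show n ∈ {L | 0 < L ∧ Coverable δ L E} from ⟨hn, hcov⟩) :
    coverNumber δ E ≤ n).not_gt hlt, fun h => ?_⟩
  obtain ⟨m, hm⟩ := hE
  have hmem : 0 < coverNumber δ E ∧ Coverable δ (coverNumber δ E) E :=
    Nat.sInf_mem (s := {L | 0 < L ∧ Coverable δ L E}) ⟨m + 1, m.succ_pos, hm.mono_card m.le_succ⟩
  by_contra hle
  exact h (hmem.2.mono_card (not_lt.1 hle))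

theorem exists_chain_of_not_coverable {δ : ℝ} (hδ : 0 ≤ δ) {n : ℕ} {E : Set ℝ} (hE : BddBelow E)
    (h : ¬ Coverable δ n E) :
    ∃ z : Fin (n + 1) → ℝ, (∀ i, z i ∈ E) ∧ ∀ i j, i < j → z i + δ < z j := by
  induction n generalizing E with
  | zero =>
    obtain ⟨e, he⟩ := nonempty_iff_ne_empty.2 fun hE0 : E = ∅ => h (hE0 ▸ coverable_empty δ)
    exact ⟨fun _ => e, fun _ => he, fun i j hij => absurd (Fin.subsingleton_one.elim i j) hij.ne⟩
  | succ n ih =>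
    set F := E ∩ Ioi (sInf E + δ)
    have hF : ¬ Coverable δ n F := fun hF => h <| hF.cons (sInf E) fun z hz => by
      by_cases hzδ : z ≤ sInf E + δ
      · exact Or.inl ⟨csInf_le hE hz, hzδ⟩
      · exact Or.inr ⟨hz, not_le.1 hzδ⟩
    obtain ⟨z, hzF, hz⟩ := ih (hE.mono inter_subset_left) hF
    obtain ⟨e, he, hez⟩ := exists_lt_of_csInf_lt ⟨_, (hzF 0).1⟩
      (show sInf E < z 0 - δ by linarith [(hzF 0).2.out])
    have hz_ge : ∀ j, z 0 ≤ z j := fun j => by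
      rcases (Fin.zero_le j).eq_or_lt with h0 | h0
      · rw [h0]
      · linarith [hz 0 j h0]
    refine ⟨Fin.cons e z, Fin.cases he fun i => (hzF i).1, fun i j hij => ?_⟩
    induction i using Fin.cases with
    | zero =>
      induction j using Fin.cases with
      | zero => exact absurd hij (lt_irrefl 0)
      | succ j => simpa using (by linarith [hz_ge j] : e + δ < z j)
    | succ i =>
      induction j using Fin.cases with
      | zero => exact absurd hij (Fin.succ_pos i).not_gt
      | succ j => simpa using hz i j (Fin.succ_lt_succ_iff.1 hij)

section Interval

variable {a b c d δ w : ℝ}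

theorem max_add_min_div_two_mem_Ico (hw : w ∈ Icc a b ∩ Ico c d) :
    (max a c + min b d) / 2 ∈ Ico c d := by
  obtain ⟨⟨haw, hwb⟩, hcw, hwd⟩ := hw
  have hmax : max a c < d := max_lt (by linarith) (by linarith)
  have hmin : c ≤ min b d := le_min (by linarith) (by linarith)
  constructor <;> linarith [le_max_right a c, min_le_right b d]

theorem Icc_inter_Ico_subset_closedBall (hab : b - a ≤ δ) :
    Icc a b ∩ Ico c d ⊆ closedBall ((max a c + min b d) / 2) (δ / 2) := by
  rintro w ⟨⟨haw, hwb⟩, hcw, hwd⟩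
  have hmax : max a c ≤ w := max_le haw hcw
  have hmin : w ≤ min b d := le_min hwb hwd.le
  have hlen : min b d - max a c ≤ δ := by linarith [min_le_left b d, le_max_left a c]
  rw [mem_closedBall, Real.dist_eq, abs_le]
  constructor <;> linarith

end Interval

theorem Coverable.exists_closedBall_cover {δ c d : ℝ} {n : ℕ} {E : Set ℝ} (hcd : c < d)
    (hE : E ⊆ Ico c d) (h : Coverable δ n E) :
    ∃ p : Fin n → ℝ, (∀ j, p j ∈ Ico c d) ∧ E ⊆ ⋃ j, closedBall (p j) (δ / 2) := by
  classical
  obtain ⟨a, b, hab, hcov⟩ := h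
  refine ⟨fun j => if (Icc (a j) (b j) ∩ Ico c d).Nonempty then (max (a j) c + min (b j) d) / 2
    else c, fun j => ?_, fun z hz => ?_⟩
  · dsimp only
    split_ifs with hj
    · exact max_add_min_div_two_mem_Ico hj.some_mem
    · exact ⟨le_rfl, hcd⟩
  · obtain ⟨j, hzj⟩ := mem_iUnion.1 (hcov hz)
    have hz' : z ∈ Icc (a j) (b j) ∩ Ico c d := ⟨hzj, hE hz⟩
    refine mem_iUnion.2 ⟨j, ?_⟩
    dsimp only
    rw [if_pos ⟨z, hz'⟩]
    exact Icc_inter_Ico_subset_closedBall (hab j) hz'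

theorem Coverable.exists_measure_inv_le_closedBall {δ c d : ℝ} {n : ℕ} {E : Set ℝ} (hcd : c < d)
    (hE : E ⊆ Ico c d) (hn : 0 < n) (h : Coverable δ n E) :
    ∃ μ : Measure ℝ, IsProbabilityMeasure μ ∧ μ (Ico c d)ᶜ = 0 ∧
      ∀ z ∈ E, (n : ℝ≥0∞)⁻¹ ≤ μ (closedBall z (δ / 2)) := by
  have : Nonempty (Fin n) := ⟨⟨0, hn⟩⟩
  obtain ⟨p, hp, hcov⟩ := h.exists_closedBall_cover hcd hE
  have hp_meas : Measurable p := measurable_of_finite p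
  refine ⟨((PMF.uniformOfFintype (Fin n)).map p).toMeasure, inferInstance, ?_, fun z hz => ?_⟩
  · rw [PMF.toMeasure_map_apply _ _ _ hp_meas measurableSet_Ico.compl]
    convert measure_empty (μ := (PMF.uniformOfFintype (Fin n)).toMeasure)
    exact eq_empty_of_forall_notMem fun j hj => hj (hp j)
  · obtain ⟨j, hj⟩ := mem_iUnion.1 (hcov hz)
    rw [PMF.toMeasure_map_apply _ _ _ hp_meas measurableSet_closedBall]
    calc (n : ℝ≥0∞)⁻¹ = (PMF.uniformOfFintype (Fin n)).toMeasure {j} := by simp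
      _ ≤ _ := measure_mono <| singleton_subset_iff.2 <|
        show p j ∈ closedBall z (δ / 2) from mem_closedBall_comm.1 hj

theorem exists_measure_le_inv_card {α ι : Type*} [MeasurableSpace α] [Fintype ι] [Nonempty ι]
    (μ : Measure α) [IsProbabilityMeasure μ] {s : ι → Set α} (hd : Pairwise (Disjoint on s))
    (hs : ∀ i, MeasurableSet (s i)) : ∃ i, μ (s i) ≤ (Fintype.card ι : ℝ≥0∞)⁻¹ := by
  by_contra! h
  have hsum : ∑ i, μ (s i) ≤ 1 := by
    rw [← measure_biUnion_finset (fun i _ j _ hij => hd hij) fun i _ => hs i]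
    exact prob_le_one
  refine hsum.not_gt ?_
  calc (1 : ℝ≥0∞) = ∑ _i : ι, (Fintype.card ι : ℝ≥0∞)⁻¹ := by
        rw [Finset.sum_const, Finset.card_univ, nsmul_eq_mul,
          ENNReal.mul_inv_cancel (by simp) (by simp)]
    _ < ∑ i, μ (s i) := ENNReal.sum_lt_sum_of_nonempty Finset.univ_nonempty fun i _ => h i

section CoverNumber

variable {δ : ℝ} {L : ℕ} {E : Set ℝ}

theorem exists_measure_closedBall_le_of_le_coverNumber (hδ : 0 < δ) (hL : 2 ≤ L)
    (hE : Bornology.IsBounded E) (h : L ≤ coverNumber δ E) (μ : Measure ℝ)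
    [IsProbabilityMeasure μ] : ∃ z ∈ E, μ (closedBall z (δ / 2)) ≤ (L : ℝ≥0∞)⁻¹ := by
  have hnc : ¬ Coverable δ (L - 1) E :=
    (lt_coverNumber_iff (by omega) (hE.exists_coverable hδ)).1 (by omega)
  obtain ⟨z, hzE, hz⟩ := exists_chain_of_not_coverable hδ.le hE.bddBelow hnc
  have hd : Pairwise (Disjoint on fun i => closedBall (z i) (δ / 2)) := by
    intro i j hij
    refine closedBall_disjoint_closedBall ?_
    rw [add_halves, Real.dist_eq]
    rcases hij.lt_or_gt with hlt | hlt
    · linarith [hz i j hlt, neg_abs_le (z i - z j)]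
    · linarith [hz j i hlt, le_abs_self (z i - z j)]
  obtain ⟨i, hi⟩ := exists_measure_le_inv_card μ hd fun _ => measurableSet_closedBall
  refine ⟨z i, hzE i, hi.trans_eq ?_⟩
  rw [Fintype.card_fin, Nat.sub_add_cancel (by omega)]

theorem le_coverNumber_of_forall_measure {c d : ℝ} (hδ : 0 < δ) (hL : 2 ≤ L) (hcd : c < d)
    (hE : E ⊆ Ico c d)
    (h : ∀ μ : Measure ℝ, IsProbabilityMeasure μ → μ (Ico c d)ᶜ = 0 →
      ∃ z ∈ E, μ (closedBall z (δ / 2)) ≤ (L : ℝ≥0∞)⁻¹) :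
    L ≤ coverNumber δ E := by
  rw [← Nat.sub_add_cancel (by omega : 1 ≤ L), Nat.add_one_le_iff,
    lt_coverNumber_iff (by omega) (((isBounded_Ico c d).subset hE).exists_coverable hδ)]
  intro hcov
  obtain ⟨μ, hμ, hμE, hμz⟩ := hcov.exists_measure_inv_le_closedBall hcd hE (by omega)
  obtain ⟨z, hzE, hz⟩ := h μ hμ hμE
  have hle := (hμz z hzE).trans hz
  rw [ENNReal.inv_le_inv, Nat.cast_le] at hle
  omega

theorem le_coverNumber_iff_forall_measure {c d : ℝ} (hδ : 0 < δ) (hL : 2 ≤ L) (hcd : c < d)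
    (hE : E ⊆ Ico c d) :
    L ≤ coverNumber δ E ↔ ∀ μ : Measure ℝ, IsProbabilityMeasure μ → μ (Ico c d)ᶜ = 0 →
      ∃ z ∈ E, μ (closedBall z (δ / 2)) ≤ (L : ℝ≥0∞)⁻¹ :=
  ⟨fun h μ _ _ => exists_measure_closedBall_le_of_le_coverNumber hδ hL
    ((isBounded_Ico c d).subset hE) h μ, le_coverNumber_of_forall_measure hδ hL hcd hE⟩

end CoverNumber

theorem secure_iff_private_general (ε δ : ℝ) (L : ℕ) (hδ : 0 < δ) (hL : 2 ≤ L)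
    {N Y : ℕ} (φ : Strategy N Y) :
    IsSecure ε δ L φ ↔ IsPrivate ε δ L φ :=
  and_congr_right fun _ => forall₂_congr fun _ _ => forall₂_congr fun _ _ =>
    (le_coverNumber_iff_forall_measure hδ hL zero_lt_one fun _ hz => hz.1).symm

/-- a learner strategy is `(ε,δ,L)`-secure if and only if it is
`(ε,δ,L)`-private. -/
theorem secure_iff_private (ε δ : ℝ) (L : ℕ) (hε : 0 < ε) (hδ : 0 < δ) (hL : 2 ≤ L)
    {N Y : ℕ} (hY : 0 < Y) (φ : Strategy N Y) :
    IsSecure ε δ L φ ↔ IsPrivate ε δ L φ :=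
  secure_iff_private_general ε δ L hδ hL φ
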